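/- Suppose K is a field with more than two elements and S is a spanning subset of X, with {S_i}_{i∈I} the connected components of G(S). Then two elements x, y ∈ X belong to the same orbit of the transvection group Tr(S) if and only if y − x belongs to the span of the union of all components S_i such that neither ω(x, S_i) = {0} nor ω(y, S_i) = {0} (i.e., such that ω(x,s) ≠ 0 for some s ∈ S_i and ω(y,s) ≠ 0 for some s ∈ S_i). -/

import Mathlib

/-- Symplectic transvections as permutations. -/
def transvectionSet {K X : Type*} [Field K] [AddCommGroup X] [Module K X]
    (ω : X →ₗ[K] X →ₗ[K] K) (S : Set X) : Set (Equiv.Perm X) :=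
  {f | ∃ s ∈ S, ∃ k : K, k ≠ 0 ∧ ∀ x, f x = x + (k * ω x s) • s}

/-- The transvection group `Tr(S)`. -/
def transvectionGroup {K X : Type*} [Field K] [AddCommGroup X] [Module K X]
    (ω : X →ₗ[K] X →ₗ[K] K) (S : Set X) : Subgroup (Equiv.Perm X) :=
  Subgroup.closure (transvectionSet ω S)

/-- The graph `G(S)`. -/
def transGraph {K X : Type*} [Field K] [AddCommGroup X] [Module K X]
    (ω : X →ₗ[K] X →ₗ[K] K) (S : Set X) : SimpleGraph S :=
  SimpleGraph.fromRel (fun u v => ω u.1 v.1 ≠ 0)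

/-- The union of all connected components `S_i` of `G(S)` such that
`ω(x, S_i) ≠ {0}` and `ω(y, S_i) ≠ {0}`, i.e. the set of elements of `S`
whose component contains both some `t` with `ω(x,t) ≠ 0` and some `t'` with
`ω(y,t') ≠ 0`. -/
def relevantUnion {K X : Type*} [Field K] [AddCommGroup X] [Module K X]
    (ω : X →ₗ[K] X →ₗ[K] K) (S : Set X) (x y : X) : Set X :=
  {s : X | ∃ hs : s ∈ S,
    (∃ t : S, (transGraph ω S).connectedComponentMk t =
        (transGraph ω S).connectedComponentMk ⟨s, hs⟩ ∧ ω x t.1 ≠ 0) ∧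
    (∃ t : S, (transGraph ω S).connectedComponentMk t =
        (transGraph ω S).connectedComponentMk ⟨s, hs⟩ ∧ ω y t.1 ≠ 0)}


/-! A transvection `T_{s,k}` moves `z` by a multiple of `s`, and only if `ω(z, s) ≠ 0`. Distinct
components of `G(S)` are `ω`-orthogonal, so such a move does not change the set of components
that pair nontrivially with `z`; this gives the forward direction. Conversely, if `ω(z, r) ≠ 0`
and `ω(z + c s, r) ≠ 0` for some `r` in the component of `s`, a walk from `r` to `s` carries
`z` to `z + c s` by transvections, because over a field with more than two elements two affine
conditions on a coefficient can always be met simultaneously. Adding the summands of `y - x`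
one at a time, with a suitable detour inside each component, gives the converse. -/

open MulAction SimpleGraph

lemma MulAction.mem_orbit_trans {G α : Type*} [Group G] [MulAction G α] {a b c : α}
    (hab : b ∈ orbit G a) (hbc : c ∈ orbit G b) : c ∈ orbit G a :=
  orbit_eq_iff.mpr hab ▸ hbc

lemma exists_ne_and_ne_of_exists_ne_zero_ne_one {K : Type*} [Field K]
    (hK : ∃ k : K, k ≠ 0 ∧ k ≠ 1) (a b : K) : ∃ k : K, k ≠ a ∧ k ≠ b := by
  obtain ⟨e, he0, he1⟩ := hK
  by_contra! h
  have h0 := h 0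
  have h1 := h 1
  have he := h e
  grind +splitImp

lemma exists_add_mul_ne_zero_and_add_mul_ne_zero {K : Type*} [Field K]
    (hK : ∃ k : K, k ≠ 0 ∧ k ≠ 1) {a₁ b₁ a₂ b₂ : K} (h₁ : a₁ ≠ 0 ∨ b₁ ≠ 0)
    (h₂ : a₂ ≠ 0 ∨ b₂ ≠ 0) : ∃ k : K, a₁ + k * b₁ ≠ 0 ∧ a₂ + k * b₂ ≠ 0 := by
  have ne_root : ∀ {a b k : K}, (a ≠ 0 ∨ b ≠ 0) → k ≠ -a / b → a + k * b ≠ 0 := by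
    intro a b k hab hk hzero
    rcases eq_or_ne b 0 with hb | hb
    · simp_all
    · exact hk (by field_simp; linear_combination hzero)
  obtain ⟨k, hk₁, hk₂⟩ := exists_ne_and_ne_of_exists_ne_zero_ne_one hK (-a₁ / b₁) (-a₂ / b₂)
  exact ⟨k, ne_root h₁ hk₁, ne_root h₂ hk₂⟩

section

variable {K X : Type*} [Field K] [AddCommGroup X] [Module K X]
  (ω : X →ₗ[K] X →ₗ[K] K) (S : Set X)

lemma apply_add_smul_apply (z s t : X) (c : K) : ω (z + c • s) t = ω z t + c * ω s t := by
  simp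

namespace transGraph

lemma adj_iff (hω : ω.IsAlt) {u v : S} : (transGraph ω S).Adj u v ↔ ω u v ≠ 0 := by
  rw [transGraph, fromRel_adj]
  refine ⟨fun ⟨_, h⟩ => h.elim id (mt hω.eq_iff.mp), fun h => ⟨?_, Or.inl h⟩⟩
  rintro rfl
  exact h (hω.self_eq_zero _)

lemma apply_eq_zero_of_connectedComponentMk_ne (hω : ω.IsAlt) {s t : S}
    (hst : (transGraph ω S).connectedComponentMk s ≠ (transGraph ω S).connectedComponentMk t) :
    ω s t = 0 := by
  by_contra h
  exact hst (ConnectedComponent.sound ((adj_iff ω S hω).2 h).reachable)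

def pairedComponents (z : X) : Set (transGraph ω S).ConnectedComponent :=
  {C | ∃ t : S, (transGraph ω S).connectedComponentMk t = C ∧ ω z t ≠ 0}

def componentUnion (𝒞 : Set (transGraph ω S).ConnectedComponent) : Set X :=
  {s | ∃ hs : s ∈ S, (transGraph ω S).connectedComponentMk ⟨s, hs⟩ ∈ 𝒞}

lemma relevantUnion_eq (x y : X) : relevantUnion ω S x y =
    componentUnion ω S (pairedComponents ω S x ∩ pairedComponents ω S y) :=
  rfl

lemma mem_pairedComponents_add_smul_iff (hω : ω.IsAlt) {s : S}
    {C : (transGraph ω S).ConnectedComponent}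
    (hsC : (transGraph ω S).connectedComponentMk s ≠ C) (z : X) (c : K) :
    C ∈ pairedComponents ω S (z + c • s) ↔ C ∈ pairedComponents ω S z := by
  refine exists_congr fun t => and_congr_right fun htC => ?_
  rw [apply_add_smul_apply, apply_eq_zero_of_connectedComponentMk_ne ω S hω (htC ▸ hsC),
    mul_zero, add_zero]

end transGraph

namespace transvectionGroup

open transGraph

lemma add_smul_mem_orbit (hω : ω.IsAlt) {s : X} (hs : s ∈ S) {z : X} (hzs : ω z s ≠ 0) (c : K) :
    z + c • s ∈ orbit (transvectionGroup ω S) z := by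
  rcases eq_or_ne c 0 with rfl | hc
  · simp [mem_orbit_self]
  have hfs : ((c / ω z s) • ω.flip s) s = 0 := by simp [hω.self_eq_zero]
  let g : Equiv.Perm X := (LinearEquiv.transvection hfs).toEquiv
  have hg : ∀ x, g x = x + (c / ω z s * ω x s) • s := fun _ => rfl
  refine ⟨⟨g, Subgroup.subset_closure ⟨s, hs, c / ω z s, div_ne_zero hc hzs, hg⟩⟩, ?_⟩
  change g z = z + c • s
  rw [hg, div_mul_cancel₀ c hzs]

/-- Induction along a walk from `r` to `s`: for an edge `u – w`, the detour
`z ↦ z + k • u ↦ z + k • u + c • s ↦ z + c • s`, with `k` chosen so that both middle points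
pair with `w`, hands the witness on from `u` to `w`. -/
lemma add_smul_mem_orbit_of_reachable (hω : ω.IsAlt) (hK : ∃ k : K, k ≠ 0 ∧ k ≠ 1) {r s : S}
    (hrs : (transGraph ω S).Reachable r s) {z : X} (c : K) (hzr : ω z r ≠ 0)
    (hzcr : ω (z + c • s) r ≠ 0) : z + c • (s : X) ∈ orbit (transvectionGroup ω S) z := by
  obtain ⟨p⟩ := hrs
  induction p generalizing z with
  | nil => exact add_smul_mem_orbit ω S hω (Subtype.prop _) hzr c
  | @cons u w s huw _ ih =>
    have huw' : ω u w ≠ 0 := (adj_iff ω S hω).1 huw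
    obtain ⟨k, h₁, h₂⟩ := exists_add_mul_ne_zero_and_add_mul_ne_zero hK
      (a₁ := ω z w) (a₂ := ω (z + c • s) w) (Or.inr huw') (Or.inr huw')
    have hcomm : z + k • (u : X) + c • (s : X) = z + c • s + k • u := by abel
    have step₁ : z + k • (u : X) ∈ orbit (transvectionGroup ω S) z :=
      add_smul_mem_orbit ω S hω u.2 hzr k
    have step₂ : z + k • (u : X) + c • (s : X) ∈ orbit (transvectionGroup ω S) (z + k • u) :=
      ih (by rwa [apply_add_smul_apply]) (by rwa [hcomm, apply_add_smul_apply])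
    have step₃ := add_smul_mem_orbit ω S hω u.2 (z := z + k • (u : X) + c • (s : X))
      (by rwa [hcomm, apply_add_smul_apply, hω.self_eq_zero, mul_zero, add_zero]) (-k)
    rw [show z + k • (u : X) + c • (s : X) + (-k) • (u : X) = z + c • s by module] at step₃
    exact mem_orbit_trans step₁ (mem_orbit_trans step₂ step₃)

/-- Adding `c • s`, with `s` in the component `C`, is done as `z ↦ z + c' • s ↦ z + c' • s + v
↦ z + c • s + v`, where `c'` is chosen so that both intermediate points still pair with `C`;
the outer steps then have common witnesses in `C`, and the other components do not see `s`. -/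
lemma add_mem_orbit_of_mem_span (hω : ω.IsAlt) (hK : ∃ k : K, k ≠ 0 ∧ k ≠ 1)
    {𝒞 : Set (transGraph ω S).ConnectedComponent} {v : X}
    (hv : v ∈ Submodule.span K (componentUnion ω S 𝒞)) {z : X}
    (hz : 𝒞 ⊆ pairedComponents ω S z) (hzv : 𝒞 ⊆ pairedComponents ω S (z + v)) :
    z + v ∈ orbit (transvectionGroup ω S) z := by
  rw [← Submodule.mem_toAddSubmonoid, Submodule.span_eq_closure] at hv
  induction hv using AddSubmonoid.closure_induction_left generalizing z with
  | zero => simp [mem_orbit_self]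
  | add_left w hw v _ ih =>
    obtain ⟨c, -, s, ⟨hs, hC⟩, rfl⟩ := hw
    set C := (transGraph ω S).connectedComponentMk ⟨s, hs⟩
    obtain ⟨a, ha, hza⟩ := hz hC
    obtain ⟨b, hb, hzb⟩ := hzv hC
    have hb' : ω (z + (c • s + v)) b - c * ω s b ≠ 0 ∨ ω s b ≠ 0 := by
      by_cases hsb : ω s b = 0
      · simpa [hsb] using hzb
      · exact Or.inr hsb
    obtain ⟨c', h₁, h₂⟩ := exists_add_mul_ne_zero_and_add_mul_ne_zero hK (Or.inl hza) hb'
    have e : z + (c • s + v) = z + c' • s + v + (c - c') • s := by module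
    have hzc'vb : ω (z + c' • s + v) b ≠ 0 := by
      have : ω (z + (c • s + v)) b = ω (z + c' • s + v) b + (c - c') * ω s b := by
        rw [e, apply_add_smul_apply]
      rw [this] at h₂
      convert h₂ using 1
      ring
    have step₁ : z + c' • s ∈ orbit (transvectionGroup ω S) z :=
      add_smul_mem_orbit_of_reachable ω S hω hK (ConnectedComponent.exact ha) c' hza
        (by rwa [apply_add_smul_apply])
    have step₂ : z + c' • s + v ∈ orbit (transvectionGroup ω S) (z + c' • s) := by
      refine ih (fun D hD => ?_) (fun D hD => ?_)
      · by_cases hDC : D = C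
        · exact hDC ▸ ⟨a, ha, by rwa [apply_add_smul_apply]⟩
        · exact (mem_pairedComponents_add_smul_iff ω S hω (Ne.symm hDC) z c').2 (hz hD)
      · by_cases hDC : D = C
        · exact hDC ▸ ⟨b, hb, hzc'vb⟩
        · have hD' := hzv hD
          rw [e] at hD'
          exact (mem_pairedComponents_add_smul_iff ω S hω (Ne.symm hDC) _ _).1 hD'
    have step₃ : z + (c • s + v) ∈ orbit (transvectionGroup ω S) (z + c' • s + v) := by
      rw [e]
      exact add_smul_mem_orbit_of_reachable ω S hω hK (ConnectedComponent.exact hb) (c - c')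
        hzc'vb (by rwa [← e])
    exact mem_orbit_trans step₁ (mem_orbit_trans step₂ step₃)

lemma pairedComponents_add_smul_self (hω : ω.IsAlt) (s : S) (k : K) (z : X) :
    pairedComponents ω S (z + (k * ω z s) • s) = pairedComponents ω S z := by
  rcases eq_or_ne (ω z s) 0 with h | h
  · simp [h]
  ext C
  by_cases hsC : (transGraph ω S).connectedComponentMk s = C
  · subst hsC
    exact iff_of_true ⟨s, rfl, by rwa [apply_add_smul_apply, hω.self_eq_zero, mul_zero, add_zero]⟩
      ⟨s, rfl, h⟩
  · exact mem_pairedComponents_add_smul_iff ω S hω hsC z _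

lemma pairedComponents_apply (hω : ω.IsAlt) {g : Equiv.Perm X} (hg : g ∈ transvectionGroup ω S)
    (z : X) : pairedComponents ω S (g z) = pairedComponents ω S z := by
  induction hg using Subgroup.closure_induction generalizing z with
  | mem f hf =>
    obtain ⟨s, hs, k, -, hf⟩ := hf
    rw [hf]
    exact pairedComponents_add_smul_self ω S hω ⟨s, hs⟩ k z
  | one => rfl
  | mul f g _ _ hf hg => rw [Equiv.Perm.mul_apply, hf, hg]
  | inv f _ hf => rw [← hf (f⁻¹ z), Equiv.Perm.coe_inv, Equiv.apply_symm_apply]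

lemma apply_sub_mem_span (hω : ω.IsAlt) {g : Equiv.Perm X} (hg : g ∈ transvectionGroup ω S)
    (z : X) : g z - z ∈ Submodule.span K (componentUnion ω S (pairedComponents ω S z)) := by
  induction hg using Subgroup.closure_induction generalizing z with
  | mem f hf =>
    obtain ⟨s, hs, k, -, hf⟩ := hf
    rw [hf, add_sub_cancel_left]
    rcases eq_or_ne (ω z s) 0 with h | h
    · simp [h]
    · exact Submodule.smul_mem _ _ (Submodule.subset_span ⟨hs, ⟨s, hs⟩, rfl, h⟩)
  | one => simp
  | mul f g _ hg hf_ih hg_ih =>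
    rw [Equiv.Perm.mul_apply, ← sub_add_sub_cancel _ (g z)]
    refine add_mem ?_ (hg_ih z)
    rw [← pairedComponents_apply ω S hω hg z]
    exact hf_ih (g z)
  | inv f hf hf_ih =>
    have h := hf_ih (f⁻¹ z)
    rw [pairedComponents_apply ω S hω (inv_mem hf)] at h
    simpa using neg_mem h

end transvectionGroup

end

theorem stmt19_general {K X : Type*} [Field K] [AddCommGroup X] [Module K X]
    (ω : X →ₗ[K] X →ₗ[K] K) (halt : ∀ x, ω x x = 0)
    (hK : ∃ k : K, k ≠ 0 ∧ k ≠ 1)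
    (S : Set X)
    (x y : X) :
    (∃ g ∈ transvectionGroup ω S, g x = y) ↔
      y - x ∈ Submodule.span K (relevantUnion ω S x y) := by
  rw [transGraph.relevantUnion_eq]
  constructor
  · rintro ⟨g, hg, rfl⟩
    rw [transvectionGroup.pairedComponents_apply ω S halt hg, Set.inter_self]
    exact transvectionGroup.apply_sub_mem_span ω S halt hg x
  · intro h
    have hxy := transvectionGroup.add_mem_orbit_of_mem_span ω S halt hK h
      Set.inter_subset_left (by rw [add_sub_cancel]; exact Set.inter_subset_right)
    obtain ⟨⟨g, hg⟩, hgx⟩ := add_sub_cancel x y ▸ hxy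
    exact ⟨g, hg, hgx⟩

/-- if `K` has more than two elements and `S` spans `X`, then
`x, y ∈ X` are in the same `Tr(S)`-orbit iff `y - x` belongs to the span of
the union of all components `S_i` of `G(S)` such that neither `ω(x, S_i)` nor
`ω(y, S_i)` is `{0}`. -/
theorem stmt19 {K X : Type*} [Field K] [AddCommGroup X] [Module K X]
    [FiniteDimensional K X]
    (ω : X →ₗ[K] X →ₗ[K] K) (halt : ∀ x, ω x x = 0)
    (hK : ∃ k : K, k ≠ 0 ∧ k ≠ 1)
    (S : Set X) (hspan : Submodule.span K S = ⊤)
    (x y : X) :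
    (∃ g ∈ transvectionGroup ω S, g x = y) ↔
      y - x ∈ Submodule.span K (relevantUnion ω S x y) :=
  stmt19_general ω halt hK S x y
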